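/- Let (X, μ, T) be an invertible measure-preserving system with probability measure μ and A ⊆ X measurable with μ(A) > 0. For every L ≥ 1 there exists a positive integer n, depending only on L and μ(A), such that for every nonzero integer b there exists m ≤ n with {mb, 2mb, …, Lmb} ⊆ R(A), where R(A) = {j ∈ ℤ : μ(A ∩ T^j A) > 0}. -/

import Mathlib

/-!
In `X^L` with the product measure, the boxes `Bₘ = T^(mb) A × T^(2mb) A × ⋯ × T^(Lmb) A` all have
measure `μ(A)^L`, so among `n > μ(A)^(-L)` of them two, `Bₘ` and `Bₘ'` with `m < m'`, overlap in
positive measure. As `T` preserves `μ`, that overlap has measure `∏ᵢ μ(A ∩ T^(i(m' - m)b) A)`, so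
every factor is positive and `m' - m` is the required multiplier.
-/

open MeasureTheory
open scoped ENNReal

theorem exists_lt_measure_inter_ne_zero_of_measure_univ_lt_sum {α : Type*} [MeasurableSpace α]
    (μ : Measure α) {s : ℕ → Set α} (hs : ∀ m, NullMeasurableSet (s m) μ) {n : ℕ}
    (h : μ Set.univ < ∑ m ∈ Finset.range n, μ (s m)) :
    ∃ i j, i < j ∧ j < n ∧ μ (s i ∩ s j) ≠ 0 := by
  contrapose! h
  refine sum_measure_le_measure_univ (fun m _ => hs m) fun i hi j hj hij => ?_
  simp only [Finset.coe_range, Set.mem_Iio] at hi hj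
  rcases hij.lt_or_gt with hij | hij
  · exact h i j hij hj
  · exact AEDisjoint.symm (h j i hij hi)

theorem Equiv.Perm.zpow_image_eq_preimage {X : Type*} (T : Equiv.Perm X) (j : ℤ) (s : Set X) :
    ⇑(T ^ j) '' s = ⇑(T ^ (-j)) ⁻¹' s := by
  rw [Equiv.image_eq_preimage_symm, zpow_neg, ← Equiv.Perm.inv_def]

section PermZpow

variable {X : Type*} [MeasurableSpace X] {μ : Measure X} {T : Equiv.Perm X}

theorem measurePreserving_perm_zpow (hT' : Measurable T.symm) (hTμ : MeasurePreserving T μ μ)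
    (j : ℤ) : MeasurePreserving ⇑(T ^ j) μ μ := by
  have hT_inv : MeasurePreserving ⇑T⁻¹ μ μ :=
    MeasurePreserving.symm (e := ⟨T, hTμ.measurable, hT'⟩) hTμ
  cases j with
  | ofNat n => exact hTμ.iterate n
  | negSucc n =>
    rw [zpow_negSucc, ← inv_pow, Equiv.Perm.coe_pow]
    exact hT_inv.iterate (n + 1)

variable {s : Set X}

theorem measurableSet_perm_zpow_image (hT : ∀ j : ℤ, MeasurePreserving ⇑(T ^ j) μ μ)
    (hs : MeasurableSet s) (j : ℤ) : MeasurableSet (⇑(T ^ j) '' s) := by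
  rw [T.zpow_image_eq_preimage]
  exact (hT (-j)).measurable hs

theorem measure_perm_zpow_image (hT : ∀ j : ℤ, MeasurePreserving ⇑(T ^ j) μ μ)
    (hs : MeasurableSet s) (j : ℤ) : μ (⇑(T ^ j) '' s) = μ s := by
  rw [T.zpow_image_eq_preimage]
  exact (hT (-j)).measure_preimage hs.nullMeasurableSet

theorem measure_perm_zpow_image_inter (hT : ∀ j : ℤ, MeasurePreserving ⇑(T ^ j) μ μ)
    (hs : MeasurableSet s) (c d : ℤ) :
    μ (⇑(T ^ c) '' s ∩ ⇑(T ^ d) '' s) = μ (s ∩ ⇑(T ^ (d - c)) '' s) := by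
  have hd : ⇑(T ^ d) '' s = ⇑(T ^ c) '' (⇑(T ^ (d - c)) '' s) := by
    rw [← Set.image_comp, ← Equiv.Perm.coe_mul, ← zpow_add, add_sub_cancel]
  rw [hd, ← Set.image_inter (T ^ c).injective, measure_perm_zpow_image hT
    (hs.inter (measurableSet_perm_zpow_image hT hs _))]

end PermZpow

theorem ENNReal.one_lt_floor_one_div_add_one_mul {x : ℝ≥0∞} (hx₀ : x ≠ 0) (hx : x ≠ ∞) :
    1 < ((⌊1 / x.toReal⌋₊ + 1 : ℕ) : ℝ≥0∞) * x := by
  have hr : 0 < x.toReal := ENNReal.toReal_pos hx₀ hx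
  have h : 1 / x.toReal < (⌊1 / x.toReal⌋₊ + 1 : ℕ) := by
    push_cast
    exact Nat.lt_floor_add_one _
  have hcast : ENNReal.ofReal ((⌊1 / x.toReal⌋₊ + 1 : ℕ) * x.toReal) =
      ((⌊1 / x.toReal⌋₊ + 1 : ℕ) : ℝ≥0∞) * x := by
    rw [ENNReal.ofReal_mul (by positivity), ENNReal.ofReal_natCast, ENNReal.ofReal_toReal hx]
  rw [← hcast, ENNReal.one_lt_ofReal]
  exact (div_lt_iff₀ hr).mp h

section Box

variable {X : Type*} [MeasurableSpace X] {μ : Measure X} {T : Equiv.Perm X} {A : Set X}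
  {ι : Type*} [Fintype ι]

theorem measure_pi_perm_zpow_image [SigmaFinite μ] (hT : ∀ j : ℤ, MeasurePreserving ⇑(T ^ j) μ μ)
    (hA : MeasurableSet A) (k : ι → ℤ) :
    Measure.pi (fun _ : ι => μ) (Set.univ.pi fun i => ⇑(T ^ k i) '' A) =
      μ A ^ Fintype.card ι := by
  simp only [Measure.pi_pi, measure_perm_zpow_image hT hA, Finset.prod_const, Finset.card_univ]

theorem measure_pi_perm_zpow_image_inter [SigmaFinite μ]
    (hT : ∀ j : ℤ, MeasurePreserving ⇑(T ^ j) μ μ) (hA : MeasurableSet A) (k k' : ι → ℤ) :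
    Measure.pi (fun _ : ι => μ)
        ((Set.univ.pi fun i => ⇑(T ^ k i) '' A) ∩ Set.univ.pi fun i => ⇑(T ^ k' i) '' A) =
      ∏ i, μ (A ∩ ⇑(T ^ (k' i - k i)) '' A) := by
  simp only [← Set.pi_inter_distrib, Measure.pi_pi, measure_perm_zpow_image_inter hT hA]

theorem exists_pos_measure_inter_perm_zpow_image [IsProbabilityMeasure μ]
    (hT : ∀ j : ℤ, MeasurePreserving ⇑(T ^ j) μ μ) (hA : MeasurableSet A) (k : ι → ℤ) {n : ℕ}
    (hn : 1 < n * μ A ^ Fintype.card ι) :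
    ∃ m : ℕ, 1 ≤ m ∧ m < n ∧ ∀ i, 0 < μ (A ∩ ⇑(T ^ (m * k i)) '' A) := by
  let ν : Measure (ι → X) := Measure.pi fun _ => μ
  let box : ℕ → Set (ι → X) := fun m => Set.univ.pi fun i => ⇑(T ^ (m * k i)) '' A
  have hbox : ∀ m, NullMeasurableSet (box m) ν := fun m =>
    (MeasurableSet.univ_pi fun _ => measurableSet_perm_zpow_image hT hA _).nullMeasurableSet
  have hsum : ν Set.univ < ∑ m ∈ Finset.range n, ν (box m) := by
    simpa [ν, box, measure_pi_perm_zpow_image hT hA] using hn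
  obtain ⟨i, j, hij, hjn, hpos⟩ :=
    exists_lt_measure_inter_ne_zero_of_measure_univ_lt_sum ν hbox hsum
  refine ⟨j - i, by omega, by omega, fun l => pos_iff_ne_zero.mpr ?_⟩
  rw [measure_pi_perm_zpow_image_inter hT hA, Finset.prod_ne_zero_iff] at hpos
  simpa [Nat.cast_sub hij.le, sub_mul] using hpos l (Finset.mem_univ l)

end Box

theorem uniform_multiple_recurrence_general
    {X : Type*} [MeasurableSpace X] (μ : Measure X) [IsProbabilityMeasure μ]
    (T : Equiv.Perm X) (hT' : Measurable T.symm)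
    (hTμ : MeasurePreserving T μ μ)
    (A : Set X) (hA : MeasurableSet A) (hpos : 0 < μ A)
    (L : ℕ) :
    ∃ n : ℕ, 0 < n ∧ n = Nat.floor (1 / (μ A).toReal ^ L) + 1 ∧
      ∀ b : ℤ, b ≠ 0 →
        ∃ m : ℕ, 1 ≤ m ∧ m ≤ n ∧
          ∀ i : ℕ, 1 ≤ i → i ≤ L →
            0 < μ (A ∩ ⇑(T ^ ((i : ℤ) * (m : ℤ) * b)) '' A) := by
  refine ⟨_, Nat.succ_pos _, rfl, fun b _ => ?_⟩
  have hn : 1 < ((⌊1 / (μ A).toReal ^ L⌋₊ + 1 : ℕ) : ℝ≥0∞) * μ A ^ Fintype.card (Fin L) := by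
    rw [Fintype.card_fin, ← ENNReal.toReal_pow]
    exact ENNReal.one_lt_floor_one_div_add_one_mul (pow_ne_zero L hpos.ne')
      (ENNReal.pow_ne_top (measure_ne_top μ A))
  obtain ⟨m, hm, hmn, hrec⟩ := exists_pos_measure_inter_perm_zpow_image
    (measurePreserving_perm_zpow hT' hTμ) hA (fun i : Fin L => ((i : ℤ) + 1) * b) hn
  refine ⟨m, hm, hmn.le, fun i hi hiL => ?_⟩
  have hexp : (i : ℤ) * m * b = m * (((i - 1 : ℕ) + 1 : ℤ) * b) := by
    push_cast [Nat.cast_sub hi]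
    ring
  rw [hexp]
  exact hrec ⟨i - 1, by omega⟩

/-- Uniform multiple recurrence: there is `n`, depending only on `L` and `μ(A)`,
such that for every nonzero `b` some `m ≤ n` has `{mb, 2mb, …, Lmb} ⊆ R(A)`. -/
theorem uniform_multiple_recurrence
    {X : Type*} [MeasurableSpace X] (μ : Measure X) [IsProbabilityMeasure μ]
    (T : Equiv.Perm X) (hT : Measurable T) (hT' : Measurable T.symm)
    (hTμ : MeasurePreserving T μ μ)
    (A : Set X) (hA : MeasurableSet A) (hpos : 0 < μ A)
    (L : ℕ) (hL : 1 ≤ L) :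
    ∃ n : ℕ, 0 < n ∧ n = Nat.floor (1 / (μ A).toReal ^ L) + 1 ∧
      ∀ b : ℤ, b ≠ 0 →
        ∃ m : ℕ, 1 ≤ m ∧ m ≤ n ∧
          ∀ i : ℕ, 1 ≤ i → i ≤ L →
            0 < μ (A ∩ ⇑(T ^ ((i : ℤ) * (m : ℤ) * b)) '' A) :=
  uniform_multiple_recurrence_general μ T hT' hTμ A hA hpos L
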